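/- arXiv:1106.3468 — 2 statements merged into one kernel-verified Lean document; each statement's English description precedes it below -/
import Mathlib

section
/- Let α : I → Rⁿ₂ (n ≥ 8) be a null Cartan curve with degeneration degree two, nullity degree sequence {0,1,2,2,1,0,…,0}, Cartan frame {L₁, L₂, W₃, N₂, N₁, W₄, …, W₍ₙ₋₂₎} and curvatures k₁, …, k₍ₙ₋₃₎ with kᵢ(t) ≠ 0 for 3 ≤ i ≤ n−3 and all t, and let a₁, …, a₍ₙ₋₄₎ be the associated functions. If α lies on a pseudo-sphere of radius r > 0, i.e. there exists ξ₀ ∈ Rⁿ₂ with ⟨α(t) − ξ₀, α(t) − ξ₀⟩ = r² for all t ∈ I, then Σ_{i=2}^{n−4} aᵢ(t)² = r² for all t ∈ I. -/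
/-- The index-two pseudo-Euclidean inner product on `ℝⁿ`:
`⟨x,y⟩ = -x¹y¹ - x²y² + x³y³ + ⋯ + xⁿyⁿ`. -/
def mInner {n : ℕ} (x y : Fin n → ℝ) : ℝ :=
  ∑ i : Fin n, (if i.val < 2 then (-1 : ℝ) else 1) * x i * y i

open Matrix

lemma mInner_comm {n : ℕ} (x y : Fin n → ℝ) : mInner x y = mInner y x := by
  unfold mInner; apply Finset.sum_congr rfl; intros; ring

lemma mInner_add_right {n : ℕ} (x y z : Fin n → ℝ) :
    mInner x (y + z) = mInner x y + mInner x z := by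
  unfold mInner; rw [← Finset.sum_add_distrib]
  apply Finset.sum_congr rfl; intro i _; simp only [Pi.add_apply]; split <;> ring

lemma mInner_sub_right {n : ℕ} (x y z : Fin n → ℝ) :
    mInner x (y - z) = mInner x y - mInner x z := by
  unfold mInner; rw [← Finset.sum_sub_distrib]
  apply Finset.sum_congr rfl; intro i _; simp only [Pi.sub_apply]; split <;> ring

lemma mInner_smul_right {n : ℕ} (c : ℝ) (x y : Fin n → ℝ) :
    mInner x (c • y) = c * mInner x y := by
  unfold mInner; rw [Finset.mul_sum]
  apply Finset.sum_congr rfl; intro i _; simp only [Pi.smul_apply, smul_eq_mul]; split <;> ring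

lemma hasDerivAt_mInner {n : ℕ} {x y : ℝ → Fin n → ℝ} {x' y' : Fin n → ℝ} {t : ℝ}
    (hx : HasDerivAt x x' t) (hy : HasDerivAt y y' t) :
    HasDerivAt (fun s => mInner (x s) (y s)) (mInner x' (y t) + mInner (x t) y') t := by
  unfold mInner
  have h : ∀ i ∈ Finset.univ, HasDerivAt
      (fun s => (if (i:Fin n).val < 2 then (-1:ℝ) else 1) * x s i * y s i)
      ((if (i:Fin n).val < 2 then (-1:ℝ) else 1) * x' i * y t i
        + (if (i:Fin n).val < 2 then (-1:ℝ) else 1) * x t i * y' i) t := by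
    intro i _
    have hxi : HasDerivAt (fun s => x s i) (x' i) t := (hasDerivAt_pi.mp hx) i
    have hyi : HasDerivAt (fun s => y s i) (y' i) t := (hasDerivAt_pi.mp hy) i
    have := (hxi.const_mul (if (i:Fin n).val < 2 then (-1:ℝ) else 1)).fun_mul hyi
    convert this using 1
  have := HasDerivAt.fun_sum h
  rw [Finset.sum_add_distrib] at this
  exact this

lemma key_deriv {n : ℕ} {I : Set ℝ} (hI : IsOpen I) {β X : ℝ → Fin n → ℝ} {φ : ℝ → ℝ}
    (hβ : Differentiable ℝ β) (hX : Differentiable ℝ X)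
    (heq : ∀ s ∈ I, mInner (β s) (X s) = φ s) {t : ℝ} (ht : t ∈ I) :
    mInner (deriv β t) (X t) + mInner (β t) (deriv X t) = deriv φ t := by
  have h1 := hasDerivAt_mInner (hβ t).hasDerivAt (hX t).hasDerivAt
  rw [← h1.deriv]
  exact Filter.EventuallyEq.deriv_eq (Filter.eventually_of_mem (hI.mem_nhds ht) heq)

def sig : ℕ → ℕ
  | 0 => 2
  | 1 => 3
  | 2 => 0
  | 3 => 1
  | (m+4) => m+4

def sgn : ℕ → ℝ := fun m => if m = 1 ∨ m = 3 then -1 else 1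

lemma sig_sig (m : ℕ) : sig (sig m) = m := by
  rcases m with _|_|_|_|m <;> rfl

lemma sgn_mul (m : ℕ) : sgn m * sgn (sig m) = 1 := by
  rcases m with _|_|_|_|m <;> simp [sgn, sig] <;> norm_num

lemma sig_lt {n m : ℕ} (hn : 4 ≤ n) (h : m < n) : sig m < n := by
  rcases m with _|_|_|_|m <;> simp [sig] <;> omega

lemma sig_ge {m : ℕ} (h : 4 ≤ m) : sig m = m := by
  rcases m with _|_|_|_|m <;> simp [sig] at * <;> omega

lemma sgn_ge {m : ℕ} (h : 4 ≤ m) : sgn m = 1 := by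
  unfold sgn; rw [if_neg]; omega

lemma inner_expansion {n : ℕ} (hn : 4 ≤ n) (f : Fin n → Fin n → ℝ) (b : Fin n → ℝ)
    (hG : ∀ i j : Fin n, mInner (f i) (f j) = if (j:ℕ) = sig (i:ℕ) then sgn (i:ℕ) else 0)
    (hc0 : ∀ i : Fin n, (i:ℕ) < 4 → mInner b (f i) = 0) :
    mInner b b = ∑ i : Fin n, (if 4 ≤ (i:ℕ) then (mInner b (f i))^2 else 0) := by
  classical
  set d : Fin n → ℝ := fun i => if (i:ℕ) < 2 then (-1:ℝ) else 1 with hd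
  have hdd : d * d = 1 := by
    funext i; simp only [hd, Pi.mul_apply, Pi.one_apply]; split <;> norm_num
  set η : Matrix (Fin n) (Fin n) ℝ := Matrix.diagonal d with hη
  set M : Matrix (Fin n) (Fin n) ℝ := Matrix.of f with hM
  set G : Matrix (Fin n) (Fin n) ℝ :=
    Matrix.of (fun i j : Fin n => if (j:ℕ) = sig (i:ℕ) then sgn (i:ℕ) else 0) with hGdef
  have hηη : η * η = 1 := by
    rw [hη, Matrix.diagonal_mul_diagonal]
    ext i j
    rcases eq_or_ne i j with h|h
    · subst h
      simp only [Matrix.diagonal_apply_eq, Matrix.one_apply_eq, hd]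
      split <;> norm_num
    · simp [Matrix.diagonal_apply_ne _ h, Matrix.one_apply_ne h]
  have hMηM : M * η * Mᵀ = G := by
    ext i j
    calc (M * η * Mᵀ) i j = ∑ p, M i p * d p * M j p := by
          rw [Matrix.mul_apply]
          apply Finset.sum_congr rfl
          intro p _
          rw [hη, Matrix.mul_diagonal, Matrix.transpose_apply]
      _ = mInner (f i) (f j) := by
          unfold mInner
          apply Finset.sum_congr rfl
          intro p _
          simp only [hM, Matrix.of_apply, hd]
          ring
      _ = G i j := by rw [hG i j]; rfl
  have hGG : G * G = 1 := by
    ext i j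
    rw [Matrix.mul_apply, Matrix.one_apply]
    have hσlt : sig (i:ℕ) < n := sig_lt hn i.isLt
    rw [Finset.sum_eq_single_of_mem (⟨sig (i:ℕ), hσlt⟩ : Fin n) (Finset.mem_univ _)]
    · show (G i ⟨sig (i:ℕ), hσlt⟩) * (G ⟨sig (i:ℕ), hσlt⟩ j) = _
      simp only [hGdef, Matrix.of_apply, sig_sig, if_true]
      rcases eq_or_ne i j with h|h
      · subst h
        rw [if_pos rfl, if_pos rfl]
        exact sgn_mul _
      · rw [if_neg (by intro hv; exact h (Fin.ext hv.symm)), if_neg h, mul_zero]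
    · intro k _ hk
      have : (k:ℕ) ≠ sig (i:ℕ) := by
        intro hv; exact hk (Fin.ext hv)
      show (G i k) * (G k j) = 0
      simp only [hGdef, Matrix.of_apply]
      rw [if_neg this, zero_mul]
  have h1 : M * (η * Mᵀ * G) = 1 := by
    simp only [← Matrix.mul_assoc]
    rw [hMηM, hGG]
  have h2 : η * Mᵀ * G * M = 1 := by
    have := mul_eq_one_comm.mp h1
    simpa only [← Matrix.mul_assoc] using this
  have hMGM : Mᵀ * G * M = η := by
    have h3 := congrArg (fun X => η * X) h2
    simp only [Matrix.mul_one] at h3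
    rw [← h3]
    simp only [← Matrix.mul_assoc]
    rw [hηη, Matrix.one_mul]
  set c : Fin n → ℝ := fun i => mInner b (f i) with hcdef
  have hηb : ∀ p, (η *ᵥ b) p = d p * b p := by
    intro p; rw [hη, Matrix.mulVec_diagonal]
  have hηb' : η *ᵥ b = fun p => d p * b p := funext hηb
  have hc : c = M.mulVec (η.mulVec b) := by
    funext i
    show mInner b (f i) = _
    unfold mInner
    rw [hηb']
    simp only [Matrix.mulVec, dotProduct, hM, Matrix.of_apply, hd]
    apply Finset.sum_congr rfl
    intro p _
    ring
  have hbb : mInner b b = b ⬝ᵥ η.mulVec b := by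
    unfold mInner
    rw [hηb']
    simp only [dotProduct, hd]
    apply Finset.sum_congr rfl
    intro p _
    ring
  have hstep : ∀ v : Fin n → ℝ, (M *ᵥ v) ⬝ᵥ (G *ᵥ (M *ᵥ v)) = v ⬝ᵥ (η *ᵥ v) := by
    intro v
    have h4 : M *ᵥ v = v ᵥ* Mᵀ := by rw [Matrix.vecMul_transpose]
    rw [Matrix.dotProduct_mulVec, h4, Matrix.vecMul_vecMul, ← Matrix.dotProduct_mulVec,
      ← h4, Matrix.mulVec_mulVec, hMGM]
  have hkey : c ⬝ᵥ (G *ᵥ c) = mInner b b := by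
    rw [hc, hstep (η *ᵥ b), Matrix.mulVec_mulVec, hηη, Matrix.one_mulVec,
      dotProduct_comm, ← hbb]
  rw [← hkey, dotProduct]
  apply Finset.sum_congr rfl
  intro i _
  by_cases hi : 4 ≤ (i:ℕ)
  · rw [if_pos hi]
    have hGv : (G.mulVec c) i = c i := by
      rw [Matrix.mulVec, dotProduct]
      rw [Finset.sum_eq_single_of_mem i (Finset.mem_univ _)]
      · show (G i i) * c i = c i
        simp only [hGdef, Matrix.of_apply]
        rw [if_pos (sig_ge hi).symm, sgn_ge hi, one_mul]
      · intro k _ hk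
        show (G i k) * c k = 0
        simp only [hGdef, Matrix.of_apply]
        rw [if_neg, zero_mul]
        rw [sig_ge hi]
        intro hv; exact hk (Fin.ext hv)
    rw [hGv]
    show c i * c i = (c i)^2
    ring
  · rw [if_neg hi]
    have : c i = 0 := hc0 i (by omega)
    rw [this, zero_mul]

/-- **Pseudo-spherical null curves in Rⁿ₂, part (a).**
If the null Cartan curve `α` (degeneration degree two, nullity degree sequence
`{0,1,2,2,1,0,…,0}`, `kᵢ ≠ 0` for `3 ≤ i ≤ n-3`) lies on a pseudo-sphere of radius
`r > 0`, then `∑_{i=2}^{n-4} aᵢ(t)² = r²` on `I`. -/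
theorem pseudoSpherical_necessary
    (n : ℕ) (hn : 8 ≤ n) (I : Set ℝ) (hI : IsOpen I)
    (α L1 L2 N2 N1 : ℝ → Fin n → ℝ) (W : ℕ → ℝ → Fin n → ℝ)
    (k a : ℕ → ℝ → ℝ)
    -- smoothness
    (hαs : ContDiff ℝ (⊤ : ℕ∞) α) (hL1s : ContDiff ℝ (⊤ : ℕ∞) L1) (hL2s : ContDiff ℝ (⊤ : ℕ∞) L2)
    (hN2s : ContDiff ℝ (⊤ : ℕ∞) N2) (hN1s : ContDiff ℝ (⊤ : ℕ∞) N1)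
    (hWs : ∀ i, ContDiff ℝ (⊤ : ℕ∞) (W i)) (hks : ∀ i, ContDiff ℝ (⊤ : ℕ∞) (k i))
    (has : ∀ i, ContDiff ℝ (⊤ : ℕ∞) (a i))
    -- the curvatures k₃,…,k₍ₙ₋₃₎ never vanish
    (hknz : ∀ i, 3 ≤ i → i ≤ n - 3 → ∀ t ∈ I, k i t ≠ 0)
    -- Cartan equations on I
    (hα : ∀ t ∈ I, deriv α t = L1 t)
    (hL1 : ∀ t ∈ I, deriv L1 t = L2 t)
    (hL2 : ∀ t ∈ I, deriv L2 t = W 3 t)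
    (hW3 : ∀ t ∈ I, deriv (W 3) t = -(k 1 t) • L2 t + N2 t)
    (hN2 : ∀ t ∈ I, deriv N2 t = k 2 t • L1 t + N1 t - k 1 t • W 3 t)
    (hN1 : ∀ t ∈ I, deriv N1 t = k 2 t • L2 t + k 3 t • W 4 t)
    (hW4 : ∀ t ∈ I, deriv (W 4) t = -(k 3 t) • L1 t + k 4 t • W 5 t)
    (hWi : ∀ i, 5 ≤ i → i ≤ n - 3 → ∀ t ∈ I,
      deriv (W i) t = -(k (i - 1) t) • W (i - 1) t + k i t • W (i + 1) t)
    (hWlast : ∀ t ∈ I, deriv (W (n - 2)) t = -(k (n - 3) t) • W (n - 3) t)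
    -- metric relations of the Cartan frame
    (hL1L1 : ∀ t ∈ I, mInner (L1 t) (L1 t) = 0)
    (hL2L2 : ∀ t ∈ I, mInner (L2 t) (L2 t) = 0)
    (hN1N1 : ∀ t ∈ I, mInner (N1 t) (N1 t) = 0)
    (hN2N2 : ∀ t ∈ I, mInner (N2 t) (N2 t) = 0)
    (hL1N1 : ∀ t ∈ I, mInner (L1 t) (N1 t) = 1)
    (hL2N2 : ∀ t ∈ I, mInner (L2 t) (N2 t) = -1)
    (hL1L2 : ∀ t ∈ I, mInner (L1 t) (L2 t) = 0)
    (hL1N2 : ∀ t ∈ I, mInner (L1 t) (N2 t) = 0)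
    (hL2N1 : ∀ t ∈ I, mInner (L2 t) (N1 t) = 0)
    (hN1N2 : ∀ t ∈ I, mInner (N1 t) (N2 t) = 0)
    (hWW : ∀ i j, 3 ≤ i → i ≤ n - 2 → 3 ≤ j → j ≤ n - 2 → ∀ t ∈ I,
      mInner (W i t) (W j t) = if i = j then 1 else 0)
    (hWL1 : ∀ i, 3 ≤ i → i ≤ n - 2 → ∀ t ∈ I, mInner (W i t) (L1 t) = 0)
    (hWL2 : ∀ i, 3 ≤ i → i ≤ n - 2 → ∀ t ∈ I, mInner (W i t) (L2 t) = 0)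
    (hWN1 : ∀ i, 3 ≤ i → i ≤ n - 2 → ∀ t ∈ I, mInner (W i t) (N1 t) = 0)
    (hWN2 : ∀ i, 3 ≤ i → i ≤ n - 2 → ∀ t ∈ I, mInner (W i t) (N2 t) = 0)
    -- the associated functions a₁,…,a₍ₙ₋₄₎
    (ha1 : ∀ t ∈ I, a 1 t = 0)
    (ha2 : ∀ t ∈ I, a 2 t = 1 / k 3 t)
    (ha3 : ∀ t ∈ I, a 3 t = -(deriv (k 3) t) / ((k 3 t) ^ 2 * k 4 t))
    (hai : ∀ i, 5 ≤ i → i ≤ n - 3 → ∀ t ∈ I,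
      a (i - 1) t = (deriv (a (i - 2)) t + a (i - 3) t * k (i - 1) t) / k i t)
    -- α lies on a pseudo-sphere of radius r
    (r : ℝ) (hr : 0 < r) (ξ₀ : Fin n → ℝ)
    (hsphere : ∀ t ∈ I, mInner (α t - ξ₀) (α t - ξ₀) = r ^ 2) :
    ∀ t ∈ I, ∑ i ∈ Finset.Icc 2 (n - 4), (a i t) ^ 2 = r ^ 2 := by
  have dα := hαs.differentiable (by simp)
  have dL1 := hL1s.differentiable (by simp)
  have dL2 := hL2s.differentiable (by simp)
  have dN2 := hN2s.differentiable (by simp)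
  have dN1 := hN1s.differentiable (by simp)
  have dW : ∀ i, Differentiable ℝ (W i) := fun i => (hWs i).differentiable (by simp)
  have dk : ∀ i, Differentiable ℝ (k i) := fun i => (hks i).differentiable (by simp)
  have da : ∀ i, Differentiable ℝ (a i) := fun i => (has i).differentiable (by simp)
  have dβ : Differentiable ℝ (fun s => α s - ξ₀) := fun s => (dα s).sub_const ξ₀
  have hβd : ∀ s ∈ I, deriv (fun u => α u - ξ₀) s = L1 s := by
    intro s hs
    rw [deriv_sub_const]
    exact hα s hs
  have stepA : ∀ s ∈ I, mInner (α s - ξ₀) (L1 s) = 0 := by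
    intro s hs
    have h := key_deriv hI dβ dβ hsphere hs
    simp only [hβd s hs, deriv_const] at h
    rw [mInner_comm (L1 s)] at h
    linarith
  have stepB : ∀ s ∈ I, mInner (α s - ξ₀) (L2 s) = 0 := by
    intro s hs
    have h := key_deriv hI dβ dL1 stepA hs
    simp only [hβd s hs, hL1 s hs, deriv_const] at h
    rw [hL1L1 s hs] at h
    linarith
  have stepC : ∀ s ∈ I, mInner (α s - ξ₀) (W 3 s) = 0 := by
    intro s hs
    have h := key_deriv hI dβ dL2 stepB hs
    simp only [hβd s hs, hL2 s hs, deriv_const] at h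
    rw [hL1L2 s hs] at h
    linarith
  have stepD : ∀ s ∈ I, mInner (α s - ξ₀) (N2 s) = 0 := by
    intro s hs
    have h := key_deriv hI dβ (dW 3) stepC hs
    simp only [hβd s hs, hW3 s hs, deriv_const, mInner_add_right, mInner_smul_right] at h
    rw [mInner_comm (L1 s) (W 3 s), hWL1 3 (by omega) (by omega) s hs, stepB s hs] at h
    linarith
  have stepE : ∀ s ∈ I, mInner (α s - ξ₀) (N1 s) = 0 := by
    intro s hs
    have h := key_deriv hI dβ dN2 stepD hs
    simp only [hβd s hs, hN2 s hs, deriv_const, mInner_add_right, mInner_sub_right,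
      mInner_smul_right] at h
    rw [hL1N2 s hs, stepA s hs, stepC s hs] at h
    linarith
  have step4 : ∀ s ∈ I, mInner (α s - ξ₀) (W 4 s) = -(a 2 s) := by
    intro s hs
    have hk3 := hknz 3 (by omega) (by omega) s hs
    have h := key_deriv hI dβ dN1 stepE hs
    simp only [hβd s hs, hN1 s hs, deriv_const, mInner_add_right, mInner_smul_right] at h
    rw [hL1N1 s hs, stepB s hs] at h
    rw [ha2 s hs]
    field_simp
    linarith
  have step5 : ∀ s ∈ I, mInner (α s - ξ₀) (W 5 s) = -(a 3 s) := by
    intro s hs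
    have hk3 := hknz 3 (by omega) (by omega) s hs
    have hk4 := hknz 4 (by omega) (by omega) s hs
    have hda2 : deriv (a 2) s = -(deriv (k 3) s) / (k 3 s) ^ 2 := by
      have h1 : HasDerivAt (fun u => (k 3 u)⁻¹) (-(deriv (k 3) s) / (k 3 s) ^ 2) s :=
        ((dk 3 s).hasDerivAt).inv hk3
      have h2 : deriv (a 2) s = deriv (fun u => (k 3 u)⁻¹) s := by
        apply Filter.EventuallyEq.deriv_eq
        apply Filter.eventually_of_mem (hI.mem_nhds hs)
        intro u hu
        rw [ha2 u hu, one_div]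
      rw [h2, h1.deriv]
    have h := key_deriv hI dβ (dW 4) step4 hs
    simp only [hβd s hs, hW4 s hs, deriv.fun_neg, mInner_add_right, mInner_smul_right] at h
    rw [mInner_comm (L1 s) (W 4 s), hWL1 4 (by omega) (by omega) s hs, stepA s hs, hda2] at h
    rw [ha3 s hs]
    field_simp at h ⊢
    linear_combination h
  have stepF : ∀ j, 4 ≤ j → j ≤ n - 2 → ∀ s ∈ I,
      mInner (α s - ξ₀) (W j s) = -(a (j - 2) s) := by
    intro j
    induction j using Nat.strong_induction_on with
    | _ j ih =>
      intro hj4 hjn2 s hs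
      by_cases hc4 : j = 4
      · subst hc4
        rw [show (4:ℕ) - 2 = 2 from rfl]
        exact step4 s hs
      by_cases hc5 : j = 5
      · subst hc5
        rw [show (5:ℕ) - 2 = 3 from rfl]
        exact step5 s hs
      obtain ⟨m, rfl⟩ : ∃ m, j = m + 1 := ⟨j - 1, by omega⟩
      have hm5 : 5 ≤ m := by omega
      have hmn : m ≤ n - 3 := by omega
      have hkm := hknz m (by omega) (by omega) s hs
      have heq : ∀ u ∈ I, mInner (α u - ξ₀) (W m u) = -(a (m - 2) u) :=
        fun u hu => ih m (by omega) (by omega) (by omega) u hu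
      have hprev : mInner (α s - ξ₀) (W (m - 1) s) = -(a (m - 3) s) := by
        have h0 := ih (m - 1) (by omega) (by omega) (by omega) s hs
        have e : m - 1 - 2 = m - 3 := by omega
        rwa [e] at h0
      have h := key_deriv hI dβ (dW m) heq hs
      simp only [hβd s hs, hWi m (by omega) (by omega) s hs, deriv.fun_neg, mInner_add_right,
        mInner_smul_right] at h
      rw [mInner_comm (L1 s) (W m s), hWL1 m (by omega) (by omega) s hs, hprev] at h
      have hrec := hai m (by omega) (by omega) s hs
      have egoal : m + 1 - 2 = m - 1 := by omega
      rw [egoal, hrec, ← neg_div, eq_div_iff hkm]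
      linear_combination h
  intro t ht
  set f : Fin n → Fin n → ℝ := fun i =>
    if (i : ℕ) = 0 then L1 t else if (i : ℕ) = 1 then L2 t else if (i : ℕ) = 2 then N1 t
    else if (i : ℕ) = 3 then N2 t else W ((i : ℕ) - 1) t with hfdef
  have hfL1 : ∀ i : Fin n, (i : ℕ) = 0 → f i = L1 t := by
    intro i h; simp [hfdef, h]
  have hfL2 : ∀ i : Fin n, (i : ℕ) = 1 → f i = L2 t := by
    intro i h; simp [hfdef, h]
  have hfN1 : ∀ i : Fin n, (i : ℕ) = 2 → f i = N1 t := by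
    intro i h; simp [hfdef, h]
  have hfN2 : ∀ i : Fin n, (i : ℕ) = 3 → f i = N2 t := by
    intro i h; simp [hfdef, h]
  have hfW : ∀ i : Fin n, 4 ≤ (i : ℕ) → f i = W ((i : ℕ) - 1) t := by
    intro i h
    simp only [hfdef]
    rw [if_neg (by omega), if_neg (by omega), if_neg (by omega), if_neg (by omega)]
  have eL1L1 := hL1L1 t ht
  have eL2L2 := hL2L2 t ht
  have eN1N1 := hN1N1 t ht
  have eN2N2 := hN2N2 t ht
  have eL1N1 := hL1N1 t ht
  have eL2N2 := hL2N2 t ht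
  have eL1L2 := hL1L2 t ht
  have eL1N2 := hL1N2 t ht
  have eL2N1 := hL2N1 t ht
  have eN1N2 := hN1N2 t ht
  have eN1L1 : mInner (N1 t) (L1 t) = 1 := by rw [mInner_comm]; exact eL1N1
  have eN2L2 : mInner (N2 t) (L2 t) = -1 := by rw [mInner_comm]; exact eL2N2
  have eL2L1 : mInner (L2 t) (L1 t) = 0 := by rw [mInner_comm]; exact eL1L2
  have eN2L1 : mInner (N2 t) (L1 t) = 0 := by rw [mInner_comm]; exact eL1N2
  have eN1L2 : mInner (N1 t) (L2 t) = 0 := by rw [mInner_comm]; exact eL2N1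
  have eN2N1 : mInner (N2 t) (N1 t) = 0 := by rw [mInner_comm]; exact eN1N2
  have sig_lt4 : ∀ m : ℕ, m < 4 → sig m < 4 := by
    intro m hm
    rcases m with _|_|_|_|m <;> simp [sig] <;> omega
  have hG : ∀ i j : Fin n, mInner (f i) (f j) = if (j : ℕ) = sig (i : ℕ) then sgn (i : ℕ) else 0 := by
    intro i j
    have hi' := i.isLt
    have hj' := j.isLt
    rcases (by omega : (i : ℕ) = 0 ∨ (i : ℕ) = 1 ∨ (i : ℕ) = 2 ∨ (i : ℕ) = 3 ∨ 4 ≤ (i : ℕ)) with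
      hi0|hi0|hi0|hi0|hi0 <;>
      rcases (by omega : (j : ℕ) = 0 ∨ (j : ℕ) = 1 ∨ (j : ℕ) = 2 ∨ (j : ℕ) = 3 ∨ 4 ≤ (j : ℕ)) with
      hj0|hj0|hj0|hj0|hj0
    · rw [hfL1 i hi0, hfL1 j hj0, hi0, hj0]; simpa [sig, sgn] using eL1L1
    · rw [hfL1 i hi0, hfL2 j hj0, hi0, hj0]; simpa [sig, sgn] using eL1L2
    · rw [hfL1 i hi0, hfN1 j hj0, hi0, hj0]; simpa [sig, sgn] using eL1N1
    · rw [hfL1 i hi0, hfN2 j hj0, hi0, hj0]; simpa [sig, sgn] using eL1N2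
    · rw [hfL1 i hi0, hfW j hj0, hi0, if_neg (by have := sig_lt4 0 (by omega); omega)]
      rw [mInner_comm]; exact hWL1 _ (by omega) (by omega) t ht
    · rw [hfL2 i hi0, hfL1 j hj0, hi0, hj0]; simpa [sig, sgn] using eL2L1
    · rw [hfL2 i hi0, hfL2 j hj0, hi0, hj0]; simpa [sig, sgn] using eL2L2
    · rw [hfL2 i hi0, hfN1 j hj0, hi0, hj0]; simpa [sig, sgn] using eL2N1
    · rw [hfL2 i hi0, hfN2 j hj0, hi0, hj0]; simpa [sig, sgn] using eL2N2
    · rw [hfL2 i hi0, hfW j hj0, hi0, if_neg (by have := sig_lt4 1 (by omega); omega)]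
      rw [mInner_comm]; exact hWL2 _ (by omega) (by omega) t ht
    · rw [hfN1 i hi0, hfL1 j hj0, hi0, hj0]; simpa [sig, sgn] using eN1L1
    · rw [hfN1 i hi0, hfL2 j hj0, hi0, hj0]; simpa [sig, sgn] using eN1L2
    · rw [hfN1 i hi0, hfN1 j hj0, hi0, hj0]; simpa [sig, sgn] using eN1N1
    · rw [hfN1 i hi0, hfN2 j hj0, hi0, hj0]; simpa [sig, sgn] using eN1N2
    · rw [hfN1 i hi0, hfW j hj0, hi0, if_neg (by have := sig_lt4 2 (by omega); omega)]
      rw [mInner_comm]; exact hWN1 _ (by omega) (by omega) t ht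
    · rw [hfN2 i hi0, hfL1 j hj0, hi0, hj0]; simpa [sig, sgn] using eN2L1
    · rw [hfN2 i hi0, hfL2 j hj0, hi0, hj0]; simpa [sig, sgn] using eN2L2
    · rw [hfN2 i hi0, hfN1 j hj0, hi0, hj0]; simpa [sig, sgn] using eN2N1
    · rw [hfN2 i hi0, hfN2 j hj0, hi0, hj0]; simpa [sig, sgn] using eN2N2
    · rw [hfN2 i hi0, hfW j hj0, hi0, if_neg (by have := sig_lt4 3 (by omega); omega)]
      rw [mInner_comm]; exact hWN2 _ (by omega) (by omega) t ht
    · rw [hfW i hi0, hfL1 j hj0, sig_ge hi0, if_neg (by omega)]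
      exact hWL1 _ (by omega) (by omega) t ht
    · rw [hfW i hi0, hfL2 j hj0, sig_ge hi0, if_neg (by omega)]
      exact hWL2 _ (by omega) (by omega) t ht
    · rw [hfW i hi0, hfN1 j hj0, sig_ge hi0, if_neg (by omega)]
      exact hWN1 _ (by omega) (by omega) t ht
    · rw [hfW i hi0, hfN2 j hj0, sig_ge hi0, if_neg (by omega)]
      exact hWN2 _ (by omega) (by omega) t ht
    · rw [hfW i hi0, hfW j hj0, sig_ge hi0, sgn_ge hi0,
        hWW ((i : ℕ) - 1) ((j : ℕ) - 1) (by omega) (by omega) (by omega) (by omega) t ht]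
      by_cases h : (j : ℕ) = (i : ℕ)
      · rw [if_pos (by omega), if_pos h]
      · rw [if_neg (by omega), if_neg h]
  have hc0 : ∀ i : Fin n, (i : ℕ) < 4 → mInner (α t - ξ₀) (f i) = 0 := by
    intro i hi
    rcases (by omega : (i : ℕ) = 0 ∨ (i : ℕ) = 1 ∨ (i : ℕ) = 2 ∨ (i : ℕ) = 3) with h|h|h|h
    · rw [hfL1 i h]; exact stepA t ht
    · rw [hfL2 i h]; exact stepB t ht
    · rw [hfN1 i h]; exact stepE t ht
    · rw [hfN2 i h]; exact stepD t ht
  have hmain := inner_expansion (by omega) f (α t - ξ₀) hG hc0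
  rw [hsphere t ht] at hmain
  have hval : ∀ i : Fin n, 4 ≤ (i : ℕ) → mInner (α t - ξ₀) (f i) = -(a ((i : ℕ) - 3) t) := by
    intro i hi
    rw [hfW i hi]
    by_cases h4 : (i : ℕ) = 4
    · rw [h4, show (4:ℕ) - 1 = 3 from rfl, show (4:ℕ) - 3 = 1 from rfl, stepC t ht, ha1 t ht]
      norm_num
    · have h0 := stepF ((i : ℕ) - 1) (by omega) (by omega) t ht
      have e : (i : ℕ) - 1 - 2 = (i : ℕ) - 3 := by omega
      rwa [e] at h0
  have hsum : ∑ i : Fin n, (if 4 ≤ (i : ℕ) then mInner (α t - ξ₀) (f i) ^ 2 else 0)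
      = ∑ i : Fin n, (if 4 ≤ (i : ℕ) then (a ((i : ℕ) - 3) t) ^ 2 else 0) := by
    apply Finset.sum_congr rfl
    intro i _
    by_cases hi : 4 ≤ (i : ℕ)
    · rw [if_pos hi, if_pos hi, hval i hi]; ring
    · rw [if_neg hi, if_neg hi]
  rw [hsum] at hmain
  have hfin : ∑ i : Fin n, (if 4 ≤ (i : ℕ) then (a ((i : ℕ) - 3) t) ^ 2 else 0)
      = ∑ i ∈ Finset.Icc 2 (n - 4), (a i t) ^ 2 := by
    rw [Fin.sum_univ_eq_sum_range (fun m => if 4 ≤ m then (a (m - 3) t) ^ 2 else 0) n]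
    rw [Finset.range_eq_Ico, ← Finset.sum_Ico_consecutive _ (by omega : (0:ℕ) ≤ 4) (by omega : 4 ≤ n)]
    have h2 : ∑ m ∈ Finset.Ico 0 4, (if 4 ≤ m then (a (m - 3) t) ^ 2 else 0) = 0 := by
      apply Finset.sum_eq_zero
      intro m hm
      rw [if_neg]
      simp only [Finset.mem_Ico] at hm
      omega
    have h3 : ∑ m ∈ Finset.Ico 4 n, (if 4 ≤ m then (a (m - 3) t) ^ 2 else 0)
        = ∑ m ∈ Finset.Ico 4 n, (a (m - 3) t) ^ 2 := by
      apply Finset.sum_congr rfl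
      intro m hm
      rw [if_pos]
      simp only [Finset.mem_Ico] at hm
      omega
    rw [h2, h3, zero_add]
    rw [show Finset.Icc 2 (n - 4) = Finset.Ico 2 (n - 3) from by
      rw [show n - 3 = (n - 4) + 1 from by omega]; exact (Finset.Ico_add_one_right_eq_Icc 2 (n - 4)).symm]
    rw [Finset.sum_Ico_eq_sum_range, Finset.sum_Ico_eq_sum_range]
    have e1 : n - 4 = (n - 5) + 1 := by omega
    have e2 : n - 3 - 2 = n - 5 := by omega
    rw [e1, e2, Finset.sum_range_succ']
    have e3 : (a (4 + 0 - 3) t) ^ 2 = 0 := by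
      rw [show 4 + 0 - 3 = 1 from rfl, ha1 t ht]
      norm_num
    rw [e3, add_zero]
    apply Finset.sum_congr rfl
    intro i _
    have e4 : 4 + (i + 1) - 3 = 2 + i := by omega
    rw [e4]
  rw [hfin] at hmain
  exact hmain.symm
end

section
/- Let c : I → R⁶₂ be a smooth curve parametrized by arc length s > 0 with ⟨c′,c′⟩ = 1, ⟨c″,c″⟩ = 0, ⟨c‴,c‴⟩ = 0 and η(s) := ⟨c⁗(s),c⁗(s)⟩^{1/2} > 0, and let I(s) = c(s) − s·c′(s) be the involute of c. Then the pseudo-arc parameter ν of I, defined by dν/ds = ⟨I‴(s), I‴(s)⟩^{1/6}, satisfies dν/ds = s^{1/3}·η(s)^{1/3}, and the pseudo-arc unit field L₁ = (dν/ds)⁻¹·I′ satisfies L₁(s) = −s^{2/3}·η(s)^{−1/3}·c″(s); moreover L₂ := (dν/ds)⁻¹·dL₁/ds = (1/3)(s^{1/3}η^{−5/3}η′ − 2s^{−2/3}η^{−2/3})·c″ − s^{1/3}η^{−2/3}·c‴. -/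
lemma mInner_expand (a b : ℝ) (x y : Fin 6 → ℝ) :
    mInner (a • x + b • y) (a • x + b • y)
      = a*a*mInner x x + (2*(a*b))*mInner x y + b*b*mInner y y := by
  simp only [mInner, Pi.add_apply, Pi.smul_apply, smul_eq_mul, Finset.mul_sum,
    ← Finset.sum_add_distrib]
  exact Finset.sum_congr rfl fun i _ => by ring

lemma cube_pow {x : ℝ} (hx : 0 < x) (k : ℤ) :
    x ^ ((k : ℝ)/3) = (x ^ ((1:ℝ)/3)) ^ k := by
  rw [← Real.rpow_intCast (x ^ ((1:ℝ)/3)) k, ← Real.rpow_mul hx.le]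
  congr 1
  ring

lemma scal2 {s e : ℝ} (hs : 0 < s) (he : 0 < e) :
    (s ^ ((1:ℝ)/3) * e ^ ((1:ℝ)/3))⁻¹ * (-s) = -(s ^ ((2:ℝ)/3) * e ^ (-(1:ℝ)/3)) := by
  have hs3 : s = (s ^ ((1:ℝ)/3)) ^ (3:ℤ) := by
    have h := cube_pow hs 3
    rw [show (((3:ℤ)):ℝ)/3 = 1 by norm_num, Real.rpow_one] at h
    exact h
  rw [show (2:ℝ)/3 = ((2:ℤ):ℝ)/3 by norm_num, cube_pow hs,
    show -(1:ℝ)/3 = ((-1:ℤ):ℝ)/3 by norm_num, cube_pow he]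
  obtain ⟨u, hu, hueq⟩ : ∃ u:ℝ, 0 < u ∧ s ^ ((1:ℝ)/3) = u :=
    ⟨_, Real.rpow_pos_of_pos hs _, rfl⟩
  obtain ⟨v, hv, hveq⟩ : ∃ v:ℝ, 0 < v ∧ e ^ ((1:ℝ)/3) = v :=
    ⟨_, Real.rpow_pos_of_pos he _, rfl⟩
  rw [hueq] at hs3
  rw [hueq, hveq, hs3]
  field_simp

lemma scal3a {s e d : ℝ} (hs : 0 < s) (he : 0 < e) :
    (s ^ ((1:ℝ)/3) * e ^ ((1:ℝ)/3))⁻¹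
        * (-((2:ℝ)/3 * s ^ ((2:ℝ)/3 - 1) * e ^ (-(1:ℝ)/3)
            + s ^ ((2:ℝ)/3) * (d * (-(1:ℝ)/3) * e ^ (-(1:ℝ)/3 - 1))))
      = (1/3) * (s ^ ((1:ℝ)/3) * e ^ (-(5:ℝ)/3) * d
          - 2 * s ^ (-(2:ℝ)/3) * e ^ (-(2:ℝ)/3)) := by
  rw [show (2:ℝ)/3 - 1 = ((-1:ℤ):ℝ)/3 by norm_num,
    show -(1:ℝ)/3 - 1 = ((-4:ℤ):ℝ)/3 by norm_num,
    show -(1:ℝ)/3 = ((-1:ℤ):ℝ)/3 by norm_num,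
    show -(5:ℝ)/3 = ((-5:ℤ):ℝ)/3 by norm_num,
    show -(2:ℝ)/3 = ((-2:ℤ):ℝ)/3 by norm_num,
    show (2:ℝ)/3 = ((2:ℤ):ℝ)/3 by norm_num,
    cube_pow hs, cube_pow he, cube_pow hs, cube_pow he, cube_pow he,
    cube_pow hs, cube_pow he]
  obtain ⟨u, hu, hueq⟩ : ∃ u:ℝ, 0 < u ∧ s ^ ((1:ℝ)/3) = u :=
    ⟨_, Real.rpow_pos_of_pos hs _, rfl⟩
  obtain ⟨v, hv, hveq⟩ : ∃ v:ℝ, 0 < v ∧ e ^ ((1:ℝ)/3) = v :=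
    ⟨_, Real.rpow_pos_of_pos he _, rfl⟩
  rw [hueq, hveq]
  field_simp
  ring

lemma scal3b {s e : ℝ} (hs : 0 < s) (he : 0 < e) :
    (s ^ ((1:ℝ)/3) * e ^ ((1:ℝ)/3))⁻¹ * (-(s ^ ((2:ℝ)/3) * e ^ (-(1:ℝ)/3)))
      = -(s ^ ((1:ℝ)/3) * e ^ (-(2:ℝ)/3)) := by
  rw [show -(1:ℝ)/3 = ((-1:ℤ):ℝ)/3 by norm_num,
    show -(2:ℝ)/3 = ((-2:ℤ):ℝ)/3 by norm_num,
    show (2:ℝ)/3 = ((2:ℤ):ℝ)/3 by norm_num,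
    cube_pow hs, cube_pow he, cube_pow he]
  obtain ⟨u, hu, hueq⟩ : ∃ u:ℝ, 0 < u ∧ s ^ ((1:ℝ)/3) = u :=
    ⟨_, Real.rpow_pos_of_pos hs _, rfl⟩
  obtain ⟨v, hv, hveq⟩ : ∃ v:ℝ, 0 < v ∧ e ^ ((1:ℝ)/3) = v :=
    ⟨_, Real.rpow_pos_of_pos he _, rfl⟩
  rw [hueq, hveq]
  field_simp

lemma scal1 {s e : ℝ} (hs : 0 < s) (he : 0 < e) :
    ((s * e)^2) ^ ((1:ℝ)/6) = s ^ ((1:ℝ)/3) * e ^ ((1:ℝ)/3) := by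
  have h0 : (0:ℝ) ≤ s * e := mul_nonneg hs.le he.le
  rw [← Real.rpow_natCast (s * e) 2, ← Real.rpow_mul h0,
    show ((2:ℕ):ℝ) * ((1:ℝ)/6) = (1:ℝ)/3 by norm_num,
    Real.mul_rpow hs.le he.le]

lemma iter_contDiff (c : ℝ → Fin 6 → ℝ) (hcs : ContDiff ℝ (⊤ : ℕ∞) c) :
    ∀ k, ContDiff ℝ ((⊤:ℕ∞) : WithTop ℕ∞) (deriv^[k] c) := by
  intro k
  induction k with
  | zero => simpa using hcs.of_le (by simp)
  | succ n ih =>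
      rw [Function.iterate_succ_apply']
      exact (contDiff_infty_iff_deriv.mp ih).2

lemma iter_hasDerivAt (c : ℝ → Fin 6 → ℝ) (hcs : ContDiff ℝ (⊤ : ℕ∞) c) (k : ℕ) (t : ℝ) :
    HasDerivAt (deriv^[k] c) (deriv^[k+1] c t) t := by
  have h := ((iter_contDiff c hcs k).differentiable (by simp) t).hasDerivAt
  rwa [Function.iterate_succ_apply']

lemma mInner_hasDerivAt (x y x' y' : ℝ → Fin 6 → ℝ) (t : ℝ)
    (hx : HasDerivAt x (x' t) t) (hy : HasDerivAt y (y' t) t) :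
    HasDerivAt (fun u => mInner (x u) (y u))
      (mInner (x' t) (y t) + mInner (x t) (y' t)) t := by
  have hxi := hasDerivAt_pi.mp hx
  have hyi := hasDerivAt_pi.mp hy
  have h : HasDerivAt (fun u => ∑ i : Fin 6,
      (if (i:Fin 6).val < 2 then (-1:ℝ) else 1) * x u i * y u i)
      (∑ i : Fin 6, ((if (i:Fin 6).val < 2 then (-1:ℝ) else 1) * x' t i * y t i
        + (if (i:Fin 6).val < 2 then (-1:ℝ) else 1) * x t i * y' t i)) t := by
    apply HasDerivAt.fun_sum
    intro i _
    have := (((hxi i).const_mul (if (i:Fin 6).val < 2 then (-1:ℝ) else 1)).fun_mul (hyi i))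
    convert this using 1
  rw [show (∑ i : Fin 6, ((if (i:Fin 6).val < 2 then (-1:ℝ) else 1) * x' t i * y t i
        + (if (i:Fin 6).val < 2 then (-1:ℝ) else 1) * x t i * y' t i))
      = mInner (x' t) (y t) + mInner (x t) (y' t) by
    simp [mInner, Finset.sum_add_distrib]] at h
  exact h

/-- **Pseudo-arc parameter and first two Cartan frame fields of the involute.**
Let `c` be a smooth curve in `R⁶₂` parametrized by arc length `s > 0` with `⟨c′,c′⟩ = 1`,
`⟨c″,c″⟩ = 0`, `⟨c‴,c‴⟩ = 0` and `η(s) = ⟨c⁗,c⁗⟩^{1/2} > 0`, and let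
`I(s) = c(s) - s • c′(s)` be its involute.  Then the pseudo-arc parameter `ν` of `I`
satisfies `dν/ds = ⟨I‴,I‴⟩^{1/6} = s^{1/3} η^{1/3}`, the field
`L₁ = (dν/ds)⁻¹ • I′` equals `-s^{2/3} η^{-1/3} • c″`, and
`L₂ = (dν/ds)⁻¹ • L₁′ = (1/3)(s^{1/3} η^{-5/3} η′ - 2 s^{-2/3} η^{-2/3}) • c″
  - s^{1/3} η^{-2/3} • c‴`. -/
theorem involute_pseudoArc_frame
    (I : Set ℝ) (hI : IsOpen I) (hIpos : ∀ s ∈ I, (0 : ℝ) < s)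
    (c : ℝ → Fin 6 → ℝ) (hcs : ContDiff ℝ (⊤ : ℕ∞) c)
    (hc1 : ∀ s ∈ I, mInner (deriv c s) (deriv c s) = 1)
    (hc2 : ∀ s ∈ I, mInner (deriv^[2] c s) (deriv^[2] c s) = 0)
    (hc3 : ∀ s ∈ I, mInner (deriv^[3] c s) (deriv^[3] c s) = 0)
    (η : ℝ → ℝ)
    (hη : ∀ s, η s = Real.sqrt (mInner (deriv^[4] c s) (deriv^[4] c s)))
    (hηpos : ∀ s ∈ I, 0 < η s)
    (Inv : ℝ → Fin 6 → ℝ) (hInv : ∀ s, Inv s = c s - s • deriv c s)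
    (L1 : ℝ → Fin 6 → ℝ)
    (hL1 : ∀ s, L1 s = (s ^ ((1 : ℝ)/3) * η s ^ ((1 : ℝ)/3))⁻¹ • deriv Inv s) :
    ∀ s ∈ I,
      (mInner (deriv^[3] Inv s) (deriv^[3] Inv s)) ^ ((1 : ℝ)/6)
        = s ^ ((1 : ℝ)/3) * η s ^ ((1 : ℝ)/3) ∧
      L1 s = (-(s ^ ((2 : ℝ)/3) * η s ^ (-(1 : ℝ)/3))) • deriv^[2] c s ∧
      (s ^ ((1 : ℝ)/3) * η s ^ ((1 : ℝ)/3))⁻¹ • deriv L1 s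
        = ((1/3) * (s ^ ((1 : ℝ)/3) * η s ^ (-(5 : ℝ)/3) * deriv η s
            - 2 * s ^ (-(2 : ℝ)/3) * η s ^ (-(2 : ℝ)/3))) • deriv^[2] c s
          - (s ^ ((1 : ℝ)/3) * η s ^ (-(2 : ℝ)/3)) • deriv^[3] c s := by
  have hD := iter_hasDerivAt c hcs
  -- derivatives of the involute
  have hInv1 : ∀ t : ℝ, HasDerivAt Inv ((-t) • deriv^[2] c t) t := by
    intro t
    have hfun : Inv = fun u => c u - u • deriv c u := funext hInv
    rw [hfun]
    have h0 : HasDerivAt c (deriv c t) t := by simpa using hD 0 t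
    have h1 : HasDerivAt (fun u : ℝ => u • deriv c u)
        (t • deriv^[2] c t + (1:ℝ) • deriv c t) t := by
      have := (hasDerivAt_id' t).fun_smul (by simpa using hD 1 t :
        HasDerivAt (deriv c) (deriv^[2] c t) t)
      simpa using this
    have := h0.sub h1
    exact this.congr_deriv (by module)
  have hDI1 : deriv Inv = fun t => (-t) • deriv^[2] c t :=
    funext fun t => (hInv1 t).deriv
  have hInv2 : ∀ t : ℝ, HasDerivAt (deriv Inv)
      ((-1:ℝ) • deriv^[2] c t + (-t) • deriv^[3] c t) t := by
    intro t
    rw [hDI1]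
    have := ((hasDerivAt_id' t).fun_neg.fun_smul (hD 2 t))
    exact this.congr_deriv (by module)
  have hDI2 : deriv^[2] Inv = fun t => (-1:ℝ) • deriv^[2] c t + (-t) • deriv^[3] c t := by
    funext t
    rw [show deriv^[2] Inv = deriv (deriv Inv) by
      rw [Function.iterate_succ_apply', Function.iterate_one]]
    exact (hInv2 t).deriv
  have hInv3 : ∀ t : ℝ, HasDerivAt (deriv^[2] Inv)
      ((-2:ℝ) • deriv^[3] c t + (-t) • deriv^[4] c t) t := by
    intro t
    rw [hDI2]
    have hA : HasDerivAt (fun u : ℝ => (-1:ℝ) • deriv^[2] c u)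
        ((-1:ℝ) • deriv^[3] c t) t := (hD 2 t).const_smul (-1:ℝ)
    have hB := ((hasDerivAt_id' t).fun_neg.fun_smul (hD 3 t))
    have := hA.add hB
    exact this.congr_deriv (by module)
  have hDI3 : ∀ t : ℝ, deriv^[3] Inv t
      = (-2:ℝ) • deriv^[3] c t + (-t) • deriv^[4] c t := by
    intro t
    rw [show deriv^[3] Inv = deriv (deriv^[2] Inv) by
      rw [Function.iterate_succ_apply']]
    exact (hInv3 t).deriv
  intro s hs
  have hspos := hIpos s hs
  have hηs := hηpos s hs
  -- ⟨c⁗,c⁗⟩ = η² and positivity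
  have hQpos : 0 < mInner (deriv^[4] c s) (deriv^[4] c s) := by
    have := hηpos s hs
    rw [hη s] at this
    exact Real.sqrt_pos.mp this
  have h44 : mInner (deriv^[4] c s) (deriv^[4] c s) = η s * η s := by
    rw [hη s]
    exact (Real.mul_self_sqrt hQpos.le).symm
  -- ⟨c‴,c⁗⟩ = 0 on I
  have h34 : mInner (deriv^[3] c s) (deriv^[3] c s) = 0 ∧
      mInner (deriv^[3] c s) (deriv^[4] c s) = 0 := by
    refine ⟨hc3 s hs, ?_⟩
    have hG : HasDerivAt (fun t => mInner (deriv^[3] c t) (deriv^[3] c t))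
        (mInner (deriv^[4] c s) (deriv^[3] c s)
          + mInner (deriv^[3] c s) (deriv^[4] c s)) s :=
      mInner_hasDerivAt _ _ (deriv^[4] c) (deriv^[4] c) s (hD 3 s) (hD 3 s)
    have hzero : (fun t => mInner (deriv^[3] c t) (deriv^[3] c t))
        =ᶠ[nhds s] fun _ => (0:ℝ) := by
      filter_upwards [hI.mem_nhds hs] with t ht
      exact hc3 t ht
    have hderiv0 : deriv (fun t => mInner (deriv^[3] c t) (deriv^[3] c t)) s = 0 := by
      rw [hzero.deriv_eq, deriv_const]
    rw [hG.deriv] at hderiv0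
    have hsymm : mInner (deriv^[4] c s) (deriv^[3] c s)
        = mInner (deriv^[3] c s) (deriv^[4] c s) := by
      simp only [mInner]
      exact Finset.sum_congr rfl fun i _ => by ring
    rw [hsymm] at hderiv0
    linarith
  -- key value of ⟨I‴,I‴⟩
  have hkey : mInner (deriv^[3] Inv s) (deriv^[3] Inv s) = (s * η s)^2 := by
    rw [hDI3 s, mInner_expand (-2) (-s) (deriv^[3] c s) (deriv^[4] c s),
      h34.1, h34.2, h44]
    ring
  -- eventual formula for L1
  have hηmem : ∀ᶠ t in nhds s, t ∈ I := hI.mem_nhds hs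
  have hL1ev : L1 =ᶠ[nhds s]
      fun t => (-(t ^ ((2:ℝ)/3) * η t ^ (-(1:ℝ)/3))) • deriv^[2] c t := by
    filter_upwards [hηmem] with t ht
    rw [hL1 t, hDI1]
    show (t ^ ((1:ℝ)/3) * η t ^ ((1:ℝ)/3))⁻¹ • ((-t) • deriv^[2] c t) = _
    rw [smul_smul, scal2 (hIpos t ht) (hηpos t ht)]
  -- differentiability of η at s
  have hηfun : η = fun t => Real.sqrt (mInner (deriv^[4] c t) (deriv^[4] c t)) :=
    funext hη
  have hQdiff : DifferentiableAt ℝ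
      (fun t => mInner (deriv^[4] c t) (deriv^[4] c t)) s :=
    (mInner_hasDerivAt _ _ (deriv^[5] c) (deriv^[5] c) s (hD 4 s) (hD 4 s)).differentiableAt
  have hηdiff : DifferentiableAt ℝ η s := by
    rw [hηfun]
    exact (Real.hasDerivAt_sqrt hQpos.ne').differentiableAt.comp s hQdiff
  have hηder : HasDerivAt η (deriv η s) s := hηdiff.hasDerivAt
  -- derivative of the coefficient function
  have hA : HasDerivAt (fun t : ℝ => t ^ ((2:ℝ)/3))
      ((2:ℝ)/3 * s ^ ((2:ℝ)/3 - 1)) s :=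
    Real.hasDerivAt_rpow_const (Or.inl hspos.ne')
  have hB : HasDerivAt (fun t : ℝ => η t ^ (-(1:ℝ)/3))
      (deriv η s * (-(1:ℝ)/3) * η s ^ (-(1:ℝ)/3 - 1)) s :=
    hηder.rpow_const (Or.inl hηs.ne')
  have hψ : HasDerivAt (fun t => -(t ^ ((2:ℝ)/3) * η t ^ (-(1:ℝ)/3)))
      (-((2:ℝ)/3 * s ^ ((2:ℝ)/3 - 1) * η s ^ (-(1:ℝ)/3)
        + s ^ ((2:ℝ)/3) * (deriv η s * (-(1:ℝ)/3) * η s ^ (-(1:ℝ)/3 - 1)))) s :=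
    (hA.mul hB).neg
  have hL1der : HasDerivAt
      (fun t => (-(t ^ ((2:ℝ)/3) * η t ^ (-(1:ℝ)/3))) • deriv^[2] c t)
      ((-(s ^ ((2:ℝ)/3) * η s ^ (-(1:ℝ)/3))) • deriv^[3] c s
        + (-((2:ℝ)/3 * s ^ ((2:ℝ)/3 - 1) * η s ^ (-(1:ℝ)/3)
          + s ^ ((2:ℝ)/3) * (deriv η s * (-(1:ℝ)/3) * η s ^ (-(1:ℝ)/3 - 1))))
            • deriv^[2] c s) s :=
    hψ.smul (hD 2 s)
  have hL1s : L1 s = (-(s ^ ((2:ℝ)/3) * η s ^ (-(1:ℝ)/3))) • deriv^[2] c s :=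
    hL1ev.self_of_nhds
  have hderivL1 : deriv L1 s
      = (-(s ^ ((2:ℝ)/3) * η s ^ (-(1:ℝ)/3))) • deriv^[3] c s
        + (-((2:ℝ)/3 * s ^ ((2:ℝ)/3 - 1) * η s ^ (-(1:ℝ)/3)
          + s ^ ((2:ℝ)/3) * (deriv η s * (-(1:ℝ)/3) * η s ^ (-(1:ℝ)/3 - 1))))
            • deriv^[2] c s := by
    rw [hL1ev.deriv_eq]
    exact hL1der.deriv
  refine ⟨?_, hL1s, ?_⟩
  · rw [hkey]
    exact scal1 hspos hηs
  · rw [hderivL1, smul_add, smul_smul, smul_smul,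
      scal3b hspos hηs, scal3a hspos hηs]
    module
end
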